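/- The relation ⊨_MR is not ≤_p-monotone in general: there exist a non-convex aggregate atom A (e.g., with two-valued satisfaction Z ⊨ A iff #(Z ∩ {p}) − #(Z ∩ {q}) ≥ 0 over atoms {p,q,s}) and consistent pairs (∅, {p,q,s}) ≤_p (∅, {q}) such that (∅, {p,q,s}) ⊨_MR A but (∅, {q}) ⊭_MR A. -/
import Mathlib


open scoped Classical

/-- The Marek-Remmel ternary satisfaction relation for an aggregate atom given by a
two-valued satisfaction predicate `sat`. -/
def mrSat {α : Type*} (sat : Set α → Prop) (J I : Set α) : Prop :=
  sat I ∧ ∃ Z : Set α, Z ⊆ J ∧ sat Z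

/-- Convexity of an aggregate atom. -/
def ConvexAgg {α : Type*} (sat : Set α → Prop) : Prop :=
  ∀ X Y Z : Set α, X ⊆ Y → Y ⊆ Z → sat X → sat Z → sat Y

/-- `⊨_MR` is not `≤_p`-monotone in general: the aggregate atom
`SUM[1:p, -1:q] ≥ 0` is non-convex, and although `(∅,{p,q,s}) ≤_p (∅,{q})`,
we have `(∅,{p,q,s}) ⊨_MR A` but `(∅,{q}) ⊭_MR A`. -/
theorem mrSat_not_lep_monotone {α : Type*} (p q s : α)
    (hpq : p ≠ q) (hps : p ≠ s) (hqs : q ≠ s) :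
    let sat : Set α → Prop := fun Z =>
      (if p ∈ Z then (1 : ℤ) else 0) - (if q ∈ Z then (1 : ℤ) else 0) ≥ 0
    ¬ ConvexAgg sat ∧
    (∅ : Set α) ⊆ (∅ : Set α) ∧ ({q} : Set α) ⊆ ({p, q, s} : Set α) ∧
    mrSat sat (∅ : Set α) ({p, q, s} : Set α) ∧
    ¬ mrSat sat (∅ : Set α) ({q} : Set α) := by
  intro sat
  have hsatq : ¬ sat ({q} : Set α) := by
    simp [sat, hpq]
  refine ⟨?_, subset_rfl, ?_, ?_, ?_⟩
  · intro h
    exact hsatq (h ∅ {q} {p, q} (by simp) (by simp) (by simp [sat, hpq]) (by simp [sat, hpq.symm]))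
  · intro x hx; simp at hx; simp [hx]
  · exact ⟨by simp [sat, hpq.symm, hps.symm], ∅, subset_rfl, by simp [sat, hpq]⟩
  · rintro ⟨h, -⟩; exact hsatq h
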